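/- Clamp of an integer counter via three-way table: for any integer s with −(L−1) ≤ s ≤ 2L−1, the number of output spikes produced by running L timesteps of thresholded subtraction from initial potential s·θ/L with threshold θ/L equals L if s ≥ L, equals s if 0 < s < L, and equals 0 if s ≤ 0. -/

import Mathlib

/-!
Starting from an integer multiple `s · θs` of the threshold, the potential stays on the lattice
`ℤ · θs` and drops by one step exactly while it is at least `θs`; so it reads
`(s - min t (max s 0)) · θs` at time `t`, a spike is emitted at time `t` iff `t < s`, and
`L` timesteps produce `min L (max s 0)` spikes.
-/

/-- Membrane potential under thresholded subtraction. -/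
noncomputable def stage3V (θs : ℝ) (init : ℝ) : ℕ → ℝ
  | 0 => init
  | t + 1 => stage3V θs init t - (if θs ≤ stage3V θs init t then θs else 0)

section ThresholdedSubtraction

variable {θs : ℝ} (hθs : 0 < θs)
include hθs

lemma le_intCast_mul_iff {c : ℤ} : θs ≤ (c : ℝ) * θs ↔ 1 ≤ c := by
  rw [le_mul_iff_one_le_left hθs]
  exact_mod_cast Iff.rfl

lemma stage3V_intCast_mul (s : ℤ) (t : ℕ) :
    stage3V θs ((s : ℝ) * θs) t = ((s - min (t : ℤ) (max s 0) : ℤ) : ℝ) * θs := by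
  induction t with
  | zero => simp [stage3V]
  | succ t ih =>
    rw [stage3V, ih]
    by_cases hspike : 1 ≤ s - min (t : ℤ) (max s 0)
    · rw [if_pos ((le_intCast_mul_iff hθs).mpr hspike),
        show s - min ((t + 1 : ℕ) : ℤ) (max s 0) = s - min (t : ℤ) (max s 0) - 1 by omega]
      push_cast
      ring
    · rw [if_neg (mt (le_intCast_mul_iff hθs).mp hspike),
        show s - min ((t + 1 : ℕ) : ℤ) (max s 0) = s - min (t : ℤ) (max s 0) by omega]
      ring

lemma le_stage3V_intCast_mul_iff (s : ℤ) (t : ℕ) :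
    θs ≤ stage3V θs ((s : ℝ) * θs) t ↔ (t : ℤ) < s := by
  rw [stage3V_intCast_mul hθs, le_intCast_mul_iff hθs]
  omega

lemma sum_range_spikes_intCast_mul (s : ℤ) (n : ℕ) :
    ∑ t ∈ Finset.range n, (if θs ≤ stage3V θs ((s : ℝ) * θs) t then (1 : ℤ) else 0) =
      min (n : ℤ) (max s 0) := by
  simp only [le_stage3V_intCast_mul_iff hθs]
  induction n with
  | zero => simp
  | succ n ih =>
    rw [Finset.sum_range_succ, ih]
    split_ifs <;> omega

end ThresholdedSubtraction

theorem clamp_three_way_general (θ : ℝ) (hθ : 0 < θ) (L : ℕ) (hL : 0 < L) (s : ℤ) :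
    ((L : ℤ) ≤ s →
      (∑ t ∈ Finset.range L,
        (if θ / L ≤ stage3V (θ / L) ((s : ℝ) * (θ / L)) t then (1:ℤ) else 0)) = L) ∧
    (0 < s → s < L →
      (∑ t ∈ Finset.range L,
        (if θ / L ≤ stage3V (θ / L) ((s : ℝ) * (θ / L)) t then (1:ℤ) else 0)) = s) ∧
    (s ≤ 0 →
      (∑ t ∈ Finset.range L,
        (if θ / L ≤ stage3V (θ / L) ((s : ℝ) * (θ / L)) t then (1:ℤ) else 0)) = 0) := by
  rw [sum_range_spikes_intCast_mul (div_pos hθ (Nat.cast_pos.mpr hL))]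
  omega

theorem clamp_three_way (θ : ℝ) (hθ : 0 < θ) (L : ℕ) (hL : 0 < L) (s : ℤ)
    (hlo : -((L : ℤ) - 1) ≤ s) (hhi : s ≤ 2 * L - 1) :
    ((L : ℤ) ≤ s →
      (∑ t ∈ Finset.range L,
        (if θ / L ≤ stage3V (θ / L) ((s : ℝ) * (θ / L)) t then (1:ℤ) else 0)) = L) ∧
    (0 < s → s < L →
      (∑ t ∈ Finset.range L,
        (if θ / L ≤ stage3V (θ / L) ((s : ℝ) * (θ / L)) t then (1:ℤ) else 0)) = s) ∧
    (s ≤ 0 →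
      (∑ t ∈ Finset.range L,
        (if θ / L ≤ stage3V (θ / L) ((s : ℝ) * (θ / L)) t then (1:ℤ) else 0)) = 0) :=
  clamp_three_way_general θ hθ L hL s
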